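/- arXiv:2401.14653 — 2 statements merged into one kernel-verified Lean document; each statement's English description precedes it below -/
import Mathlib

section
/- Let G be a finite simple graph of order p and size q that has exactly one vertex u of maximum degree Δ ≥ 3, such that u is not adjacent to any pendant vertex, every other vertex of G has degree at most m < Δ, G has exactly k ≥ Δ pendant edges, and Δ(Δ+1) > max{m(2(p+q) − m + 1), 4(p+q) − 2}. If G admits a local total antimagic labeling, then χ_lt(G) ≥ k + 2. -/
open scoped Classical

namespace LTA

variable {V : Type*} {W : Type*}

/-- The induced weight of an edge: the sum of the labels of its two endpoints. -/
noncomputable def eWeight (fV : V → ℕ) : Sym2 V → ℕ :=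
  Sym2.lift ⟨fun a b => fV a + fV b, fun a b => Nat.add_comm _ _⟩

/-- The induced weight of a vertex: the sum of the labels of its incident edges. -/
noncomputable def vWeight [Fintype V] (G : SimpleGraph V) (fE : Sym2 V → ℕ) (v : V) : ℕ :=
  ∑ e ∈ G.edgeFinset, if v ∈ e then fE e else 0

/-- A total labeling: the labels form a bijection from `V ∪ E` onto `{1, …, p + q}`. -/
def IsTotalLabeling [Fintype V] (G : SimpleGraph V) (fV : V → ℕ) (fE : Sym2 V → ℕ) : Prop :=
  Function.Injective (Sum.elim fV (fun e : G.edgeSet => fE e.1)) ∧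
    Set.range (Sum.elim fV (fun e : G.edgeSet => fE e.1)) =
      Set.Icc 1 (Fintype.card V + G.edgeFinset.card)

/-- A local total antimagic labeling. -/
def IsLocalTotalAntimagic [Fintype V] (G : SimpleGraph V) (fV : V → ℕ) (fE : Sym2 V → ℕ) :
    Prop :=
  IsTotalLabeling G fV fE ∧
    (∀ u v, G.Adj u v → vWeight G fE u ≠ vWeight G fE v) ∧
    (∀ e₁ ∈ G.edgeSet, ∀ e₂ ∈ G.edgeSet, e₁ ≠ e₂ → (∃ v, v ∈ e₁ ∧ v ∈ e₂) →
      eWeight fV e₁ ≠ eWeight fV e₂) ∧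
    (∀ v : V, ∀ e ∈ G.edgeSet, v ∈ e → vWeight G fE v ≠ eWeight fV e)

/-- The number of distinct induced weights of a total labeling. -/
noncomputable def weightCount [Fintype V] (G : SimpleGraph V) (fV : V → ℕ)
    (fE : Sym2 V → ℕ) : ℕ :=
  (Finset.image (vWeight G fE) Finset.univ ∪ Finset.image (eWeight fV) G.edgeFinset).card

/-- The local total antimagic chromatic number `χ_lt`. -/
noncomputable def chiLT [Fintype V] (G : SimpleGraph V) : ℕ :=
  sInf {n | ∃ fV fE, IsLocalTotalAntimagic G fV fE ∧ weightCount G fV fE = n}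

/-- A pendant edge: an edge incident to a vertex of degree 1. -/
def IsPendantEdge [Fintype V] (G : SimpleGraph V) (e : Sym2 V) : Prop :=
  e ∈ G.edgeSet ∧ ∃ v ∈ e, G.degree v = 1

/-- The number of pendant edges of `G`. -/
noncomputable def pendantEdgeCount [Fintype V] (G : SimpleGraph V) : ℕ :=
  (G.edgeFinset.filter fun e => ∃ v ∈ e, G.degree v = 1).card

/-- A local antimagic (edge) labeling: a bijection from the edges onto `{1, …, q}` such that
adjacent vertices get distinct induced vertex weights. -/
def IsLocalAntimagic [Fintype V] (G : SimpleGraph V) (fE : Sym2 V → ℕ) : Prop :=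
  Set.InjOn fE G.edgeSet ∧ fE '' G.edgeSet = Set.Icc 1 G.edgeFinset.card ∧
    ∀ u v, G.Adj u v → vWeight G fE u ≠ vWeight G fE v

/-- The local antimagic chromatic number `χ_la`. -/
noncomputable def chiLA [Fintype V] (G : SimpleGraph V) : ℕ :=
  sInf {n | ∃ fE, IsLocalAntimagic G fE ∧ (Finset.image (vWeight G fE) Finset.univ).card = n}

/-- A local edge antimagic (vertex) labeling: a bijection from the vertices onto `{1, …, p}`
such that edges sharing an endpoint get distinct induced edge weights. -/
def IsLocalEdgeAntimagic [Fintype V] (G : SimpleGraph V) (fV : V → ℕ) : Prop :=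
  Function.Injective fV ∧ Set.range fV = Set.Icc 1 (Fintype.card V) ∧
    ∀ e₁ ∈ G.edgeSet, ∀ e₂ ∈ G.edgeSet, e₁ ≠ e₂ → (∃ v, v ∈ e₁ ∧ v ∈ e₂) →
      eWeight fV e₁ ≠ eWeight fV e₂

/-- The local edge antimagic chromatic number `χ_lea`. -/
noncomputable def chiLEA [Fintype V] (G : SimpleGraph V) : ℕ :=
  sInf {n | ∃ fV, IsLocalEdgeAntimagic G fV ∧ (Finset.image (eWeight fV) G.edgeFinset).card = n}

/-- The disjoint union of `m` copies of `G`. -/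
def copies (m : ℕ) (G : SimpleGraph V) : SimpleGraph (Fin m × V) where
  Adj x y := x.1 = y.1 ∧ G.Adj x.2 y.2
  symm := ⟨fun x y h => ⟨h.1.symm, h.2.symm⟩⟩
  loopless := ⟨fun x h => G.loopless.irrefl x.2 h.2⟩

/-- The graph obtained from `G` by attaching `s` pendant edges to the vertex `v`. -/
def attachPendants (G : SimpleGraph V) (v : V) (s : ℕ) : SimpleGraph (V ⊕ Fin s) :=
  SimpleGraph.fromRel (fun x y =>
    (∃ a b, G.Adj a b ∧ x = Sum.inl a ∧ y = Sum.inl b) ∨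
    (∃ i : Fin s, x = Sum.inl v ∧ y = Sum.inr i))

/-- The fan graph `f_n` (n triangles sharing a common vertex) with `k` pendant edges attached
to every degree-2 vertex: `f_n(k)`.  The common vertex is `Sum.inl none`, the outer vertices
are `Sum.inl (some w)`, and the pendant vertices are `Sum.inr (w, t)`. -/
def fanGraph (n k : ℕ) :
    SimpleGraph (Option (Fin n × Fin 2) ⊕ (Fin n × Fin 2) × Fin k) :=
  SimpleGraph.fromRel (fun x y =>
    (∃ w, x = Sum.inl none ∧ y = Sum.inl (some w)) ∨
    (∃ i : Fin n, x = Sum.inl (some (i, 0)) ∧ y = Sum.inl (some (i, 1))) ∨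
    (∃ w t, x = Sum.inl (some w) ∧ y = Sum.inr (w, t)))

/-!
Pendant edges carry pairwise distinct labels, and the label of a pendant edge is also the weight
of its pendant vertex, so these are `k` distinct vertex weights. Let `vx` be the pendant edge with
the largest label `L`. Since adjacent vertices have distinct weights, the support vertex `x` has
a second incident edge, so its weight exceeds `L`. A vertex of degree `d` has weight between
`d(d+1)/2` and `d(2(p+q) - d + 1)/2`, so the size condition forces the weight of `u` to exceed that
of every other vertex, in particular that of `x ≠ u`. This gives `k + 2` distinct weights.
-/

open Finset

theorem sum_range_add_le_sum (s : Finset ℕ) {a : ℕ} (ha : ∀ x ∈ s, a ≤ x) :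
    ∑ i ∈ range #s, (a + i) ≤ ∑ x ∈ s, x := by
  induction s using Finset.induction_on_max with
  | empty => simp
  | insert b t hlt ih =>
    have hbt : b ∉ t := fun hb => (hlt b hb).false
    have hab : a ≤ b := ha b (mem_insert_self b t)
    have hcard : #t ≤ b - a := by
      simpa using card_le_card fun x hx => mem_Ico.2 ⟨ha x (mem_insert_of_mem hx), hlt x hx⟩
    rw [card_insert_of_notMem hbt, sum_range_succ, sum_insert hbt]
    have := ih fun x hx => ha x (mem_insert_of_mem hx)
    omega

theorem card_mul_card_add_one_le_two_mul_sum (s : Finset ℕ) (hs : ∀ x ∈ s, 1 ≤ x) :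
    #s * (#s + 1) ≤ 2 * ∑ x ∈ s, x := by
  have h := sum_range_add_le_sum s hs
  rw [sum_add_distrib, sum_const, card_range, smul_eq_mul, mul_one] at h
  have gauss := sum_range_id_mul_two #s
  obtain rfl | hne := s.eq_empty_or_nonempty
  · simp
  · obtain ⟨c, hc⟩ : ∃ c, #s = c + 1 := ⟨#s - 1, by have := hne.card_pos; omega⟩
    rw [hc] at h gauss ⊢
    simp only [Nat.add_sub_cancel] at gauss
    nlinarith

theorem two_mul_sum_add_card_mul_card_le (s : Finset ℕ) {N : ℕ} (hs : ∀ x ∈ s, x ≤ N) :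
    2 * ∑ x ∈ s, x + #s * #s ≤ #s * (2 * N + 1) := by
  have hinj : Set.InjOn (N - ·) s := fun x hx y hy hxy => by
    have := hs x hx; have := hs y hy; simp only at hxy; omega
  have h := sum_range_add_le_sum (s.image (N - ·)) (a := 0) (by simp)
  rw [card_image_of_injOn hinj, sum_image hinj] at h
  simp only [zero_add] at h
  have hsum : ∑ x ∈ s, x + ∑ x ∈ s, (N - x) = #s * N := by
    rw [← sum_add_distrib, sum_congr rfl fun x hx => Nat.add_sub_cancel' (hs x hx), sum_const,
      smul_eq_mul]
  have gauss := sum_range_id_mul_two #s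
  obtain rfl | hne := s.eq_empty_or_nonempty
  · simp
  · obtain ⟨c, hc⟩ : ∃ c, #s = c + 1 := ⟨#s - 1, by have := hne.card_pos; omega⟩
    rw [hc] at h gauss hsum ⊢
    simp only [Nat.add_sub_cancel] at gauss
    nlinarith

section Weights

variable [Fintype V] {G : SimpleGraph V} {fV : V → ℕ} {fE : Sym2 V → ℕ}

theorem vWeight_eq_sum_incidenceFinset (G : SimpleGraph V) (fE : Sym2 V → ℕ) (v : V) :
    vWeight G fE v = ∑ e ∈ G.incidenceFinset v, fE e := by
  rw [SimpleGraph.incidenceFinset_eq_filter, sum_filter]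
  rfl

theorem injOn_incidenceFinset (hinj : Set.InjOn fE G.edgeSet) (v : V) :
    Set.InjOn fE (G.incidenceFinset v) :=
  hinj.mono (by simpa using G.incidenceSet_subset v)

theorem vWeight_eq_sum_image (hinj : Set.InjOn fE G.edgeSet) (v : V) :
    vWeight G fE v = ∑ x ∈ (G.incidenceFinset v).image fE, x := by
  rw [vWeight_eq_sum_incidenceFinset, sum_image (injOn_incidenceFinset hinj v)]

theorem card_image_incidenceFinset (hinj : Set.InjOn fE G.edgeSet) (v : V) :
    #((G.incidenceFinset v).image fE) = G.degree v := by
  rw [card_image_of_injOn (injOn_incidenceFinset hinj v), G.card_incidenceFinset_eq_degree]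

theorem degree_mul_degree_add_one_le_two_mul_vWeight (hinj : Set.InjOn fE G.edgeSet)
    (hpos : ∀ e ∈ G.edgeSet, 1 ≤ fE e) (v : V) :
    G.degree v * (G.degree v + 1) ≤ 2 * vWeight G fE v := by
  rw [vWeight_eq_sum_image hinj, ← card_image_incidenceFinset hinj]
  refine card_mul_card_add_one_le_two_mul_sum _ (forall_mem_image.2 fun e he => hpos e ?_)
  exact ((G.mem_incidenceFinset v e).1 he).1

theorem two_mul_vWeight_le (hinj : Set.InjOn fE G.edgeSet) {N : ℕ}
    (hN : ∀ e ∈ G.edgeSet, fE e ≤ N) {v : V} {m : ℕ} (hv : G.degree v ≤ m) (hmN : m ≤ N) :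
    2 * vWeight G fE v ≤ m * (2 * N - m + 1) := by
  have h := two_mul_sum_add_card_mul_card_le ((G.incidenceFinset v).image fE) (N := N)
    (forall_mem_image.2 fun e he => hN e ((G.mem_incidenceFinset v e).1 he).1)
  rw [← vWeight_eq_sum_image hinj, card_image_incidenceFinset hinj] at h
  -- `d ↦ d (2N + 1 - d)` is increasing for `d ≤ N`
  obtain ⟨r, rfl⟩ : ∃ r, N = m + r := ⟨N - m, by omega⟩
  obtain ⟨d, hd⟩ : ∃ d, m = G.degree v + d := ⟨m - G.degree v, by omega⟩
  rw [show 2 * (m + r) - m + 1 = m + 2 * r + 1 by omega]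
  subst hd
  nlinarith

theorem vWeight_of_degree_eq_one {v : V} {e : Sym2 V} (hv : G.degree v = 1)
    (he : e ∈ G.edgeSet) (hve : v ∈ e) : vWeight G fE v = fE e := by
  have hmem : e ∈ G.incidenceFinset v := (G.mem_incidenceFinset v e).2 ⟨he, hve⟩
  obtain ⟨a, ha⟩ := card_eq_one.1 ((G.card_incidenceFinset_eq_degree v).trans hv)
  rw [ha, mem_singleton] at hmem
  rw [vWeight_eq_sum_incidenceFinset, ha, sum_singleton, hmem]

/-- The edge label is also the weight of the pendant end `v`, so local antimagicity forces a
second edge at `x`. -/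
theorem lt_vWeight_of_adj_of_degree_eq_one
    (hvv : ∀ a b, G.Adj a b → vWeight G fE a ≠ vWeight G fE b)
    (hpos : ∀ e ∈ G.edgeSet, 1 ≤ fE e) {v x : V} (hv : G.degree v = 1) (hadj : G.Adj v x) :
    fE s(v, x) < vWeight G fE x := by
  have hmem : s(v, x) ∈ G.incidenceFinset x :=
    (G.mem_incidenceFinset x _).2 ⟨hadj, Sym2.mem_mk_right v x⟩
  rw [vWeight_eq_sum_incidenceFinset]
  rcases eq_singleton_or_nontrivial hmem with hsingle | hnontriv
  · refine absurd ?_ (hvv v x hadj)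
    rw [vWeight_of_degree_eq_one hv hadj (Sym2.mem_mk_left v x), vWeight_eq_sum_incidenceFinset,
      hsingle, sum_singleton]
  · obtain ⟨e', he', hne⟩ := hnontriv.exists_ne s(v, x)
    exact single_lt_sum hne hmem he' (hpos e' ((G.mem_incidenceFinset x e').1 he').1)
      fun _ _ _ => Nat.zero_le _

theorem IsTotalLabeling.injOn_edgeSet (h : IsTotalLabeling G fV fE) : Set.InjOn fE G.edgeSet :=
  fun e₁ h₁ e₂ h₂ hfe => by
    simpa using @h.1 (Sum.inr ⟨e₁, h₁⟩) (Sum.inr ⟨e₂, h₂⟩) hfe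

theorem IsTotalLabeling.mem_Icc (h : IsTotalLabeling G fV fE) {e : Sym2 V} (he : e ∈ G.edgeSet) :
    fE e ∈ Set.Icc 1 (Fintype.card V + #G.edgeFinset) :=
  h.2 ▸ ⟨Sum.inr ⟨e, he⟩, rfl⟩

end Weights

section Pendant

variable [Fintype V] {G : SimpleGraph V} {fE : Sym2 V → ℕ}

noncomputable def pendantEdges (G : SimpleGraph V) : Finset (Sym2 V) :=
  G.edgeFinset.filter fun e => ∃ v ∈ e, G.degree v = 1

theorem card_pendantEdges (G : SimpleGraph V) : #(pendantEdges G) = pendantEdgeCount G := rfl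

theorem image_pendantEdges_subset :
    (pendantEdges G).image fE ⊆ univ.image (vWeight G fE) := by
  simp only [subset_iff, mem_image, mem_univ, true_and, forall_exists_index, and_imp]
  rintro _ e he rfl
  obtain ⟨heE, v, hve, hv⟩ := mem_filter.1 he
  exact ⟨v, vWeight_of_degree_eq_one hv (G.mem_edgeFinset.1 heE) hve⟩

theorem pendantEdgeCount_add_two_le_card_image_vWeight (hinj : Set.InjOn fE G.edgeSet)
    (hpos : ∀ e ∈ G.edgeSet, 1 ≤ fE e)
    (hvv : ∀ a b, G.Adj a b → vWeight G fE a ≠ vWeight G fE b) {u : V}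
    (hu : ∀ w, w ≠ u → vWeight G fE w < vWeight G fE u)
    (hnotadj : ∀ w, G.Adj u w → G.degree w ≠ 1) (hk : 0 < pendantEdgeCount G) :
    pendantEdgeCount G + 2 ≤ #(univ.image (vWeight G fE)) := by
  have hP : ∀ e ∈ pendantEdges G, e ∈ G.edgeSet := fun e he =>
    G.mem_edgeFinset.1 (mem_filter.1 he).1
  obtain ⟨e, he, hmax⟩ := (pendantEdges G).exists_max_image fE (card_pos.1 hk)
  obtain ⟨v, hve, hv⟩ := (mem_filter.1 he).2
  obtain ⟨x, rfl⟩ := Sym2.mem_iff_exists.1 hve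
  have hadj : G.Adj v x := hP _ he
  have hxu : x ≠ u := by
    rintro rfl
    exact hnotadj v hadj.symm hv
  have hx : fE s(v, x) < vWeight G fE x := lt_vWeight_of_adj_of_degree_eq_one hvv hpos hv hadj
  set S := (pendantEdges G).image fE
  have hS : ∀ a ∈ S, a < vWeight G fE x := forall_mem_image.2 fun e' he' =>
    (hmax e' he').trans_lt hx
  have hxS : vWeight G fE x ∉ S := fun h => (hS _ h).false
  have huS : vWeight G fE u ∉ insert (vWeight G fE x) S := by
    rw [mem_insert, not_or]
    exact ⟨(hu x hxu).ne', fun h => ((hS _ h).trans (hu x hxu)).false⟩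
  calc pendantEdgeCount G + 2 = #(insert (vWeight G fE u) (insert (vWeight G fE x) S)) := by
        rw [card_insert_of_notMem huS, card_insert_of_notMem hxS,
          card_image_of_injOn fun a ha b hb => hinj (hP a ha) (hP b hb), card_pendantEdges]
    _ ≤ #(univ.image (vWeight G fE)) :=
        card_le_card (insert_subset (mem_image_of_mem _ (mem_univ u))
          (insert_subset (mem_image_of_mem _ (mem_univ x)) image_pendantEdges_subset))

end Pendant

theorem stmt5_general {V : Type*} [Fintype V] (G : SimpleGraph V) (u : V) (Δ m k : ℕ)
    (hdeg : G.degree u = Δ)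
    (hother : ∀ w : V, w ≠ u → G.degree w ≤ m) (hm : m < Δ)
    (hnotadj : ∀ w : V, G.Adj u w → G.degree w ≠ 1)
    (hpend : pendantEdgeCount G = k) (hkΔ : Δ ≤ k)
    (hbig : Δ * (Δ + 1) >
      max (m * (2 * (Fintype.card V + G.edgeFinset.card) - m + 1))
        (4 * (Fintype.card V + G.edgeFinset.card) - 2))
    (hex : ∃ (fV : V → ℕ) (fE : Sym2 V → ℕ), IsLocalTotalAntimagic G fV fE) :
    k + 2 ≤ chiLT G := by
  obtain ⟨fV₀, fE₀, hlab₀⟩ := hex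
  refine le_csInf ⟨_, fV₀, fE₀, hlab₀, rfl⟩ ?_
  rintro _ ⟨fV, fE, ⟨hlab, hvv, -, -⟩, rfl⟩
  have hinj := hlab.injOn_edgeSet
  have hpos : ∀ e ∈ G.edgeSet, 1 ≤ fE e := fun e he => (hlab.mem_Icc he).1
  have hmN : m ≤ Fintype.card V + #G.edgeFinset := by
    have := G.degree_lt_card_verts u
    omega
  have hu : ∀ w, w ≠ u → vWeight G fE w < vWeight G fE u := fun w hw => by
    have hw := two_mul_vWeight_le hinj (fun e he => (hlab.mem_Icc he).2) (hother w hw) hmN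
    have hu := degree_mul_degree_add_one_le_two_mul_vWeight hinj hpos u
    rw [hdeg] at hu
    have := (max_lt_iff.1 hbig).1
    omega
  calc k + 2 ≤ #(univ.image (vWeight G fE)) :=
        hpend ▸ pendantEdgeCount_add_two_le_card_image_vWeight hinj hpos hvv hu hnotadj (by omega)
    _ ≤ weightCount G fV fE := card_le_card subset_union_left

/-- suppose `G` has exactly one vertex `u` of maximum degree `Δ ≥ 3`, `u` is not
adjacent to any pendant vertex, every other vertex has degree at most `m < Δ`, `G` has exactly
`k ≥ Δ` pendant edges, and `Δ(Δ+1) > max {m(2(p+q) - m + 1), 4(p+q) - 2}`.  If `G` admits a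
local total antimagic labeling, then `χ_lt(G) ≥ k + 2`. -/
theorem stmt5 {V : Type*} [Fintype V] (G : SimpleGraph V) (u : V) (Δ m k : ℕ)
    (hdeg : G.degree u = Δ) (hΔ3 : 3 ≤ Δ)
    (hother : ∀ w : V, w ≠ u → G.degree w ≤ m) (hm : m < Δ)
    (hnotadj : ∀ w : V, G.Adj u w → G.degree w ≠ 1)
    (hpend : pendantEdgeCount G = k) (hkΔ : Δ ≤ k)
    (hbig : Δ * (Δ + 1) >
      max (m * (2 * (Fintype.card V + G.edgeFinset.card) - m + 1))
        (4 * (Fintype.card V + G.edgeFinset.card) - 2))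
    (hex : ∃ (fV : V → ℕ) (fE : Sym2 V → ℕ), IsLocalTotalAntimagic G fV fE) :
    k + 2 ≤ chiLT G :=
  stmt5_general G u Δ m k hdeg hother hm hnotadj hpend hkΔ hbig hex

end LTA
end

section
/- Let G be a finite simple 2-regular graph. If G has a connected component that is a cycle of order n ≠ 6, then χ_lt(G) ≥ 4. -/
open scoped Classical

namespace LTA

variable {V : Type*} {W : Type*}

/-! Around a cycle `v₀, v₁, …` of `G` with edges `eₖ = vₖvₖ₊₁`, read the weights in the order
`e₀, v₁, e₁, v₂, …`. Any three consecutive ones belong to pairwise adjacent or incident elements,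
so they are pairwise distinct; if only three weights occur, the sequence is therefore 3-periodic.
Since `w(vₖ₊₁) = f(eₖ) + f(eₖ₊₁)`, 3-periodicity of the vertex weights makes the edge labels
6-periodic, and injectivity of the labeling forces `n ∣ 6`, i.e. `n = 3`. On a triangle,
3-periodicity says that every vertex has the weight of the opposite edge, and these three equations
force a vertex label to equal an edge label.

Since `χ_lt` is an infimum, a labeling must also exist: labeling the edges before the vertices
puts every vertex weight below every edge weight. -/

lemma eWeight_mk (fV : V → ℕ) (a b : V) : eWeight fV s(a, b) = fV a + fV b := rfl

lemma eq_of_mem_of_card_le_three {α : Type*} {S : Finset α} (hS : S.card ≤ 3) {a b c d : α}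
    (ha : a ∈ S) (hb : b ∈ S) (hc : c ∈ S) (hd : d ∈ S)
    (hab : a ≠ b) (hac : a ≠ c) (hbc : b ≠ c) (hdb : d ≠ b) (hdc : d ≠ c) : d = a := by
  by_contra hda
  have hsub : ({d, a, b, c} : Finset α) ⊆ S := by
    simp [Finset.insert_subset_iff, ha, hb, hc, hd]
  have hcard : ({d, a, b, c} : Finset α).card = 4 := by
    rw [Finset.card_insert_of_notMem (by simp [hda, hdb, hdc]),
      Finset.card_insert_of_notMem (by simp [hab, hac]), Finset.card_pair hbc]
  have := Finset.card_le_card hsub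
  omega

lemma interleaved_eq_of_card_le_three {α : Type*} {S : Finset α} (hS : S.card ≤ 3)
    {x y : ℕ → α} (hx : ∀ k, x k ∈ S) (hy : ∀ k, y k ∈ S) (hxx : ∀ k, x k ≠ x (k + 1))
    (hyy : ∀ k, y k ≠ y (k + 1)) (hxy : ∀ k, x k ≠ y k) (hxy' : ∀ k, x k ≠ y (k + 1))
    (k : ℕ) : x (k + 1) = y k ∧ y (k + 2) = x k :=
  ⟨eq_of_mem_of_card_le_three hS (hy k) (hx k) (hy (k + 1)) (hx (k + 1))
      (hxy k).symm (hyy k) (hxy' k) (hxx k).symm (hxy (k + 1)),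
    eq_of_mem_of_card_le_three hS (hx k) (hy (k + 1)) (hx (k + 1)) (hy (k + 2))
      (hxy' k) (hxx k) (hxy (k + 1)).symm (hyy (k + 1)).symm (hxy' (k + 1)).symm⟩

lemma periodic_six_of_periodic_add_succ {M : Type*} [AddCancelCommMonoid M] {b : ℕ → M}
    (h : Function.Periodic (fun k => b k + b (k + 1)) 3) : Function.Periodic b 6 := by
  intro k
  have h₀ : b (k + 3) + b (k + 4) = b k + b (k + 1) := h k
  have h₁ : b (k + 4) + b (k + 5) = b (k + 1) + b (k + 2) := h (k + 1)
  have h₂ : b (k + 5) + b (k + 6) = b (k + 2) + b (k + 3) := h (k + 2)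
  apply add_right_cancel (b := b (k + 1) + b (k + 2) + b (k + 3))
  calc b (k + 6) + (b (k + 1) + b (k + 2) + b (k + 3))
      = (b (k + 5) + b (k + 6)) + (b (k + 3) + b (k + 4)) := by rw [← h₁]; ac_rfl
    _ = b k + (b (k + 1) + b (k + 2) + b (k + 3)) := by rw [h₀, h₂]; ac_rfl

lemma Nat.not_modEq_add {n m : ℕ} (hm : 0 < m) (hmn : m < n) (k : ℕ) : ¬k ≡ k + m [MOD n] := by
  intro h
  have := (Nat.modEq_iff_dvd' (Nat.le_add_right k m)).mp h
  rw [Nat.add_sub_cancel_left] at this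
  exact absurd (Nat.le_of_dvd hm this) (by omega)

lemma vWeight_eq_add_of_adj [Fintype V] {G : SimpleGraph V} (fE : Sym2 V → ℕ) {x y₁ y₂ : V}
    (hx : G.degree x = 2) (h₁ : G.Adj x y₁) (h₂ : G.Adj x y₂) (hne : y₁ ≠ y₂) :
    vWeight G fE x = fE s(x, y₁) + fE s(x, y₂) := by
  have hne' : s(x, y₁) ≠ s(x, y₂) := mt Sym2.congr_right.mp hne
  have hpair : G.incidenceFinset x = {s(x, y₁), s(x, y₂)} := by
    refine (Finset.eq_of_subset_of_card_le ?_ ?_).symm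
    · simp [Finset.insert_subset_iff, SimpleGraph.mem_incidenceFinset, h₁, h₂]
    · rw [SimpleGraph.card_incidenceFinset_eq_degree, hx, Finset.card_pair hne']
  rw [vWeight, ← Finset.sum_filter, ← SimpleGraph.incidenceFinset_eq_filter, hpair,
    Finset.sum_pair hne']

lemma exists_adj_ne_of_degree_eq_two [Fintype V] {G : SimpleGraph V} {x : V}
    (hx : G.degree x = 2) (y : V) : ∃ w, G.Adj x w ∧ w ≠ y := by
  obtain ⟨w, hw, hwy⟩ := Finset.exists_mem_ne
    (s := G.neighborFinset x) (by rw [SimpleGraph.card_neighborFinset_eq_degree, hx]; norm_num) y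
  exact ⟨w, (G.mem_neighborFinset x w).mp hw, hwy⟩

namespace IsTotalLabeling

variable [Fintype V] {G : SimpleGraph V} {fV : V → ℕ} {fE : Sym2 V → ℕ}

lemma vertex_injective (h : IsTotalLabeling G fV fE) : Function.Injective fV :=
  h.1.comp Sum.inl_injective

lemma edge_injOn (h : IsTotalLabeling G fV fE) : Set.InjOn fE G.edgeSet :=
  fun e he e' he' hee' =>
    congrArg Subtype.val (Sum.inr_injective (h.1 (a₁ := .inr ⟨e, he⟩) (a₂ := .inr ⟨e', he'⟩) hee'))

lemma vertex_ne_edge (h : IsTotalLabeling G fV fE) (v : V) {e : Sym2 V} (he : e ∈ G.edgeSet) :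
    fV v ≠ fE e :=
  fun hve => Sum.inl_ne_inr (h.1 (a₁ := .inl v) (a₂ := .inr ⟨e, he⟩) hve)

end IsTotalLabeling

lemma isTotalLabeling_of_equiv [Fintype V] {G : SimpleGraph V} {fV : V → ℕ} {fE : Sym2 V → ℕ}
    (σ : V ⊕ G.edgeSet ≃ Fin (Fintype.card V + G.edgeFinset.card))
    (hσ : Sum.elim fV (fun e : G.edgeSet => fE e.1) = fun x => (σ x : ℕ) + 1) :
    IsTotalLabeling G fV fE := by
  rw [IsTotalLabeling, hσ]
  refine ⟨fun x y hxy => σ.injective (Fin.ext (Nat.add_right_cancel hxy)), ?_⟩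
  ext m
  simp only [Set.mem_range, Set.mem_Icc]
  constructor
  · rintro ⟨x, rfl⟩
    have := (σ x).isLt
    omega
  · rintro ⟨h₁, h₂⟩
    refine ⟨σ.symm ⟨m - 1, by omega⟩, ?_⟩
    rw [Equiv.apply_symm_apply, Fin.val_mk]
    omega

lemma exists_isTotalLabeling_edge_le_lt_vertex [Fintype V] (G : SimpleGraph V) :
    ∃ fV fE, IsTotalLabeling G fV fE ∧ (∀ e ∈ G.edgeSet, fE e ≤ G.edgeFinset.card) ∧
      ∀ v, G.edgeFinset.card < fV v := by
  set q := G.edgeFinset.card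
  let eE : G.edgeSet ≃ Fin q := Fintype.equivFinOfCardEq G.edgeFinset_card.symm
  let σ : V ⊕ G.edgeSet ≃ Fin (Fintype.card V + q) := (Equiv.sumComm _ _).trans <|
    ((eE.sumCongr (Fintype.equivFin V)).trans finSumFinEquiv).trans (finCongr (add_comm _ _))
  let fE : Sym2 V → ℕ := fun e => if h : e ∈ G.edgeSet then σ (.inr ⟨e, h⟩) + 1 else 0
  refine ⟨fun v => σ (.inl v) + 1, fE, isTotalLabeling_of_equiv σ ?_, fun e he => ?_, fun v => ?_⟩
  · ext (v | e) <;> simp [fE]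
  · simp [fE, he, σ]
  · simp [σ]

lemma isLocalTotalAntimagic_of_edge_le_lt_vertex [Fintype V] {G : SimpleGraph V}
    (hreg : G.IsRegularOfDegree 2) {fV : V → ℕ} {fE : Sym2 V → ℕ} {q : ℕ}
    (h : IsTotalLabeling G fV fE) (hE : ∀ e ∈ G.edgeSet, fE e ≤ q) (hV : ∀ v, q < fV v) :
    IsLocalTotalAntimagic G fV fE := by
  refine ⟨h, fun a b hab => ?_, ?_, fun x e he hxe => ?_⟩
  · obtain ⟨w, haw, hwb⟩ := exists_adj_ne_of_degree_eq_two (hreg a) b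
    obtain ⟨z, hbz, hza⟩ := exists_adj_ne_of_degree_eq_two (hreg b) a
    rw [vWeight_eq_add_of_adj fE (hreg a) hab haw hwb.symm,
      vWeight_eq_add_of_adj fE (hreg b) hab.symm hbz hza.symm, Sym2.eq_swap]
    intro hsum
    have := h.edge_injOn haw hbz (Nat.add_left_cancel hsum)
    rcases Sym2.eq_iff.mp this with ⟨hab', -⟩ | ⟨-, hwb'⟩
    · exact hab.ne hab'
    · exact hwb hwb'
  · rintro e₁ - e₂ - hne ⟨x, hx₁, hx₂⟩
    obtain ⟨b₁, rfl⟩ := Sym2.mem_iff_exists.mp hx₁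
    obtain ⟨b₂, rfl⟩ := Sym2.mem_iff_exists.mp hx₂
    rw [eWeight_mk, eWeight_mk]
    exact fun hsum => hne (Sym2.congr_right.mpr (h.vertex_injective (Nat.add_left_cancel hsum)))
  · obtain ⟨b, rfl⟩ := Sym2.mem_iff_exists.mp hxe
    obtain ⟨w, hxw, hwb⟩ := exists_adj_ne_of_degree_eq_two (hreg x) b
    rw [vWeight_eq_add_of_adj fE (hreg x) he hxw hwb.symm, eWeight_mk]
    exact ne_of_lt (by linarith [hE _ he, hE s(x, w) hxw, hV x, hV b])

lemma exists_isLocalTotalAntimagic [Fintype V] {G : SimpleGraph V}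
    (hreg : G.IsRegularOfDegree 2) : ∃ fV fE, IsLocalTotalAntimagic G fV fE :=
  let ⟨fV, fE, h, hE, hV⟩ := exists_isTotalLabeling_edge_le_lt_vertex G
  ⟨fV, fE, isLocalTotalAntimagic_of_edge_le_lt_vertex hreg h hE hV⟩

lemma three_le_card_supp [Fintype V] {G : SimpleGraph V} (hreg : G.IsRegularOfDegree 2)
    (c : G.ConnectedComponent) : 3 ≤ Nat.card c.supp := by
  obtain ⟨a, rfl⟩ := c.exists_rep
  have hsub : ↑(insert a (G.neighborFinset a)) ⊆ (G.connectedComponentMk a).supp := by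
    intro w hw
    simp only [Finset.coe_insert, Set.mem_insert_iff, Finset.mem_coe,
      SimpleGraph.mem_neighborFinset] at hw
    rcases hw with rfl | haw
    · exact rfl
    · exact SimpleGraph.ConnectedComponent.sound haw.symm.reachable
  calc 3 = (insert a (G.neighborFinset a)).card := by
        rw [Finset.card_insert_of_notMem (by simp), SimpleGraph.card_neighborFinset_eq_degree, hreg]
    _ ≤ Nat.card _ := by
        rw [← Set.ncard_coe_finset, Nat.card_coe_set_eq]; exact Set.ncard_le_ncard hsub

structure IsCycleSeq (G : SimpleGraph V) (n : ℕ) (v : ℕ → V) : Prop where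
  eq_iff_modEq : ∀ i j, v i = v j ↔ i ≡ j [MOD n]
  adj : ∀ k, G.Adj (v k) (v (k + 1))

open Fin.NatCast in
lemma exists_isCycleSeq_of_iso {G : SimpleGraph V} {c : G.ConnectedComponent} {n : ℕ}
    (φ : G.induce c.supp ≃g SimpleGraph.cycleGraph n) (hn : 2 ≤ n) :
    ∃ v, IsCycleSeq G n v := by
  have : NeZero n := ⟨by omega⟩
  refine ⟨fun k => φ.symm (k : Fin n), fun i j => ?_, fun k => ?_⟩
  · rw [Subtype.val_inj, φ.symm.injective.eq_iff, CharP.natCast_eq_natCast (Fin n) n]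
  · have hadj : (SimpleGraph.cycleGraph n).Adj (k : Fin n) ((k + 1 : ℕ) : Fin n) := by
      rw [SimpleGraph.cycleGraph_adj', Nat.cast_succ, add_sub_cancel_left, Fin.val_one',
        Nat.mod_eq_of_lt hn]
      exact Or.inr rfl
    exact φ.symm.map_adj_iff.mpr hadj

namespace IsCycleSeq

variable {G : SimpleGraph V} {n : ℕ} {v : ℕ → V}

lemma ne_add (hc : IsCycleSeq G n v) {m : ℕ} (hm : 0 < m) (hmn : m < n) (k : ℕ) :
    v k ≠ v (k + m) :=
  mt (hc.eq_iff_modEq _ _).mp (Nat.not_modEq_add hm hmn k)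

lemma modEq_of_edge_eq (hc : IsCycleSeq G n v) (hn : 3 ≤ n) {i j : ℕ}
    (h : s(v i, v (i + 1)) = s(v j, v (j + 1))) : i ≡ j [MOD n] := by
  rcases Sym2.eq_iff.mp h with ⟨h₁, -⟩ | ⟨h₁, h₂⟩
  · exact (hc.eq_iff_modEq i j).mp h₁
  · have e₁ := (hc.eq_iff_modEq _ _).mp h₁
    have e₂ := (hc.eq_iff_modEq _ _).mp h₂
    exact absurd (e₂.symm.trans (e₁.add_right 1)) (Nat.not_modEq_add two_pos (by omega) j)

variable [Fintype V]

lemma vWeight_succ (hc : IsCycleSeq G n v) (hn : 3 ≤ n) (hdeg : ∀ k, G.degree (v k) = 2)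
    (fE : Sym2 V → ℕ) (k : ℕ) :
    vWeight G fE (v (k + 1)) = fE s(v k, v (k + 1)) + fE s(v (k + 1), v (k + 2)) := by
  rw [vWeight_eq_add_of_adj fE (hdeg _) (hc.adj k).symm (hc.adj (k + 1))
    (hc.ne_add two_pos (by omega) k), Sym2.eq_swap]

lemma weights_interleave (hc : IsCycleSeq G n v) (hn : 3 ≤ n) {fV : V → ℕ} {fE : Sym2 V → ℕ}
    (h : IsLocalTotalAntimagic G fV fE) (hcount : weightCount G fV fE ≤ 3) (k : ℕ) :
    vWeight G fE (v (k + 2)) = eWeight fV s(v k, v (k + 1)) ∧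
      eWeight fV s(v (k + 2), v (k + 3)) = vWeight G fE (v (k + 1)) := by
  obtain ⟨-, hvv, hee, hve⟩ := h
  have hE : ∀ k, s(v k, v (k + 1)) ∈ G.edgeSet := hc.adj
  exact interleaved_eq_of_card_le_three hcount
    (x := fun k => vWeight G fE (v (k + 1))) (y := fun k => eWeight fV s(v k, v (k + 1)))
    (fun k => Finset.mem_union_left _ (Finset.mem_image_of_mem _ (Finset.mem_univ _)))
    (fun k => Finset.mem_union_right _ (Finset.mem_image_of_mem _ (G.mem_edgeFinset.mpr (hE k))))
    (fun k => hvv _ _ (hc.adj (k + 1)))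
    (fun k => hee _ (hE k) _ (hE (k + 1))
      (fun heq => Nat.not_modEq_add one_pos (by omega) k (hc.modEq_of_edge_eq hn heq))
      ⟨v (k + 1), Sym2.mem_mk_right _ _, Sym2.mem_mk_left _ _⟩)
    (fun k => hve _ _ (hE k) (Sym2.mem_mk_right _ _))
    (fun k => hve _ _ (hE (k + 1)) (Sym2.mem_mk_left _ _)) k

lemma dvd_six (hc : IsCycleSeq G n v) (hn : 3 ≤ n) (hdeg : ∀ k, G.degree (v k) = 2)
    {fV : V → ℕ} {fE : Sym2 V → ℕ} (h : IsLocalTotalAntimagic G fV fE)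
    (hcount : weightCount G fV fE ≤ 3) : n ∣ 6 := by
  have hperiodic : Function.Periodic (fun k => fE s(v k, v (k + 1))) 6 := by
    refine periodic_six_of_periodic_add_succ fun k => ?_
    calc _ = vWeight G fE (v (k + 4)) := (hc.vWeight_succ hn hdeg fE (k + 3)).symm
      _ = eWeight fV s(v (k + 2), v (k + 3)) := (hc.weights_interleave hn h hcount (k + 2)).1
      _ = vWeight G fE (v (k + 1)) := (hc.weights_interleave hn h hcount k).2
      _ = _ := hc.vWeight_succ hn hdeg fE k
  exact Nat.modEq_zero_iff_dvd.mp
    (hc.modEq_of_edge_eq hn (h.1.edge_injOn (hc.adj 6) (hc.adj 0) (hperiodic 0)))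

lemma not_three (hc : IsCycleSeq G 3 v) (hdeg : ∀ k, G.degree (v k) = 2)
    {fV : V → ℕ} {fE : Sym2 V → ℕ} (h : IsLocalTotalAntimagic G fV fE)
    (hcount : weightCount G fV fE ≤ 3) : False := by
  have hv3 : ∀ k, v (k + 3) = v k := fun k => (hc.eq_iff_modEq _ _).mpr Nat.add_modEq_right
  have key : ∀ k, fV (v (k + 2)) + fV (v k) = fE s(v k, v (k + 1)) + fE s(v (k + 1), v (k + 2)) :=
    fun k => by
      have := (hc.weights_interleave le_rfl h hcount k).2
      rwa [eWeight_mk, hv3, hc.vWeight_succ le_rfl hdeg] at this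
  have hv₃ : v 3 = v 0 := hv3 0
  have hv₄ : v 4 = v 1 := hv3 1
  have k₀ : fV (v 2) + fV (v 0) = fE s(v 0, v 1) + fE s(v 1, v 2) := key 0
  have k₁ : fV (v 3) + fV (v 1) = fE s(v 1, v 2) + fE s(v 2, v 3) := key 1
  have k₂ : fV (v 4) + fV (v 2) = fE s(v 2, v 3) + fE s(v 3, v 4) := key 2
  rw [hv₃] at k₁
  rw [hv₃, hv₄] at k₂
  have hadj : G.Adj (v 2) (v 0) := hv₃ ▸ hc.adj 2
  exact h.1.vertex_ne_edge (v 1) (e := s(v 2, v 0)) hadj (by omega)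

theorem four_le_weightCount (hc : IsCycleSeq G n v) (hn3 : 3 ≤ n) (hn6 : n ≠ 6)
    (hdeg : ∀ k, G.degree (v k) = 2) {fV : V → ℕ} {fE : Sym2 V → ℕ}
    (h : IsLocalTotalAntimagic G fV fE) : 4 ≤ weightCount G fV fE := by
  by_contra! hlt
  have hcount : weightCount G fV fE ≤ 3 := by omega
  have hn : n = 3 := by
    have := hc.dvd_six hn3 hdeg h hcount
    have := Nat.le_of_dvd (by norm_num) this
    interval_cases n <;> omega
  subst hn
  exact hc.not_three hdeg h hcount

end IsCycleSeq

/-- if `G` is a 2-regular graph having a connected component which is a cycle of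
order `n ≠ 6`, then `χ_lt(G) ≥ 4`. -/
theorem stmt10 {V : Type*} [Fintype V] (G : SimpleGraph V)
    (hreg : ∀ v : V, G.degree v = 2)
    (hcomp : ∃ c : G.ConnectedComponent, ∃ n : ℕ, n ≠ 6 ∧
      Nonempty (G.induce c.supp ≃g SimpleGraph.cycleGraph n)) :
    4 ≤ chiLT G := by
  obtain ⟨c, n, hn6, ⟨φ⟩⟩ := hcomp
  have hn3 : 3 ≤ n := by
    simpa only [Nat.card_congr φ.toEquiv, Nat.card_fin] using three_le_card_supp hreg c
  obtain ⟨v, hv⟩ := exists_isCycleSeq_of_iso φ (by omega)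
  obtain ⟨fV, fE, hlab⟩ := exists_isLocalTotalAntimagic hreg
  refine le_csInf ⟨_, fV, fE, hlab, rfl⟩ ?_
  rintro _ ⟨fV', fE', h, rfl⟩
  exact hv.four_le_weightCount hn3 hn6 (fun k => hreg _) h

end LTA
end
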